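/- Let L ∈ ℝ^{N×N} be the Laplacian matrix of a strongly connected weighted directed graph. Then there exists a vector μ ∈ ℝ^N with μ_i > 0 for all i = 1,…,N such that μ^⊤ L = 0, i.e., μ is a left eigenvector of L associated with the eigenvalue zero whose entries are all positive. -/

import Mathlib

open Finset

/-- In the weighted directed graph with weights `a` (an edge from node `j` to
node `i` whenever `a i j > 0`), node `j` is reachable from node `i`. -/
def Reachable {N : ℕ} (a : Fin N → Fin N → ℝ) : Fin N → Fin N → Prop :=
  Relation.ReflTransGen (fun u v => 0 < a v u)

/-- The Laplacian matrix of the weighted directed graph with weights `a`: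
`[L]ᵢⱼ = −aᵢⱼ` for `i ≠ j` and `[L]ᵢᵢ = ∑_{ℓ≠i} aᵢℓ`. -/
def lap {N : ℕ} (a : Fin N → Fin N → ℝ) : Matrix (Fin N) (Fin N) ℝ :=
  Matrix.of fun i j =>
    if i = j then ∑ ℓ ∈ Finset.univ.erase i, a i ℓ else -(a i j)

/-!
Since the rows of `L` sum to zero, `L` is singular and has a nonzero left kernel vector `μ`.
Because `L` has a nonnegative diagonal and nonpositive off-diagonal entries, the triangle
inequality gives `(|μ|ᵀ L)ⱼ ≤ 0` for every `j`, while `|μ|ᵀ L 𝟙 = 0`; hence `|μ|ᵀ L = 0`.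
In the equation `(|μ|ᵀ L)ⱼ = 0` every off-diagonal term has the same sign, so a zero of `|μ|`
at `j` forces zeros at every `i` with an edge `j → i`. By strong connectivity a single zero
would make `|μ|` vanish, so `|μ|` is positive.
-/

namespace Matrix

variable {ι : Type*} [Fintype ι] {L : Matrix ι ι ℝ}

theorem exists_ne_zero_vecMul_eq_zero [Nonempty ι] (hrow : L *ᵥ 1 = 0) :
    ∃ μ ≠ 0, μ ᵥ* L = 0 := by
  classical
  exact exists_vecMul_eq_zero_iff.2 (exists_mulVec_eq_zero_iff.1 ⟨1, one_ne_zero, hrow⟩)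

theorem sum_vecMul_eq_zero (hrow : L *ᵥ 1 = 0) (v : ι → ℝ) : ∑ j, (v ᵥ* L) j = 0 := by
  rw [← dotProduct_one, ← dotProduct_mulVec, hrow, dotProduct_zero]

section ZMatrix

variable (hoff : ∀ i j, i ≠ j → L i j ≤ 0)
include hoff

theorem diag_nonneg_of_mulVec_one_eq_zero (hrow : L *ᵥ 1 = 0) (j : ι) : 0 ≤ L j j := by
  classical
  have hj := congrFun hrow j
  rw [mulVec, dotProduct, ← add_sum_erase _ _ (mem_univ j)] at hj
  have hrest : ∑ i ∈ univ.erase j, L j i * 1 ≤ 0 :=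
    sum_nonpos fun i hi => by simpa using hoff j i (ne_of_mem_erase hi).symm
  simp only [Pi.one_apply, mul_one, Pi.zero_apply] at hj hrest
  linarith

theorem vecMul_abs_apply_nonpos (hrow : L *ᵥ 1 = 0) {μ : ι → ℝ} (hμ : μ ᵥ* L = 0) (j : ι) :
    (|μ| ᵥ* L) j ≤ 0 := by
  classical
  have split (v : ι → ℝ) : (v ᵥ* L) j = v j * L j j + ∑ i ∈ univ.erase j, v i * L i j := by
    rw [vecMul, dotProduct, ← add_sum_erase _ _ (mem_univ j)]
  have hdiag : μ j * L j j = -∑ i ∈ univ.erase j, μ i * L i j := by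
    have := congrFun hμ j
    rw [split, Pi.zero_apply] at this
    linarith
  have hoff_abs : ∑ i ∈ univ.erase j, |μ i * L i j| = -∑ i ∈ univ.erase j, |μ i| * L i j := by
    rw [← sum_neg_distrib]
    refine sum_congr rfl fun i hi => ?_
    rw [abs_mul, abs_of_nonpos (hoff i j (ne_of_mem_erase hi)), mul_neg]
  have hdiag_abs : |μ j| * L j j ≤ -∑ i ∈ univ.erase j, |μ i| * L i j :=
    calc |μ j| * L j j = |μ j * L j j| := by
          rw [abs_mul, abs_of_nonneg (diag_nonneg_of_mulVec_one_eq_zero hoff hrow j)]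
      _ = |∑ i ∈ univ.erase j, μ i * L i j| := by rw [hdiag, abs_neg]
      _ ≤ ∑ i ∈ univ.erase j, |μ i * L i j| := abs_sum_le_sum_abs _ _
      _ = -∑ i ∈ univ.erase j, |μ i| * L i j := hoff_abs
  simp only [split, Pi.abs_apply]
  linarith

theorem abs_vecMul_eq_zero (hrow : L *ᵥ 1 = 0) {μ : ι → ℝ} (hμ : μ ᵥ* L = 0) :
    |μ| ᵥ* L = 0 :=
  funext fun j => (sum_eq_zero_iff_of_nonpos fun k _ => vecMul_abs_apply_nonpos hoff hrow hμ k).1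
    (sum_vecMul_eq_zero hrow |μ|) j (mem_univ j)

theorem eq_zero_of_vecMul_eq_zero_of_apply_neg {ν : ι → ℝ} (hν : 0 ≤ ν) (hνL : ν ᵥ* L = 0)
    {i j : ι} (hj : ν j = 0) (hij : L i j < 0) : ν i = 0 := by
  have hterms : ∀ k ∈ univ, ν k * L k j ≤ 0 := fun k _ => by
    by_cases hkj : k = j
    · simp [hkj, hj]
    · exact mul_nonpos_of_nonneg_of_nonpos (hν k) (hoff k j hkj)
  have hterm := (sum_eq_zero_iff_of_nonpos hterms).1 (congrFun hνL j) i (mem_univ i)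
  exact (mul_eq_zero.1 hterm).resolve_right hij.ne

end ZMatrix

end Matrix

section Laplacian

open Matrix

variable {N : ℕ} {a : Fin N → Fin N → ℝ}

theorem lap_apply_of_ne {i j : Fin N} (hij : i ≠ j) : lap a i j = -a i j := by
  simp [lap, hij]

theorem lap_apply_nonpos_of_ne (ha : ∀ i j : Fin N, i ≠ j → 0 ≤ a i j) (i j : Fin N)
    (hij : i ≠ j) : lap a i j ≤ 0 := by
  rw [lap_apply_of_ne hij, neg_nonpos]
  exact ha i j hij

theorem lap_mulVec_one (a : Fin N → Fin N → ℝ) : lap a *ᵥ 1 = 0 := by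
  funext i
  rw [mulVec, dotProduct, ← add_sum_erase _ _ (mem_univ i),
    sum_congr rfl fun j hj => by rw [lap_apply_of_ne (ne_of_mem_erase hj).symm]]
  simp [lap]

theorem pos_of_vecMul_lap_eq_zero (ha : ∀ i j : Fin N, i ≠ j → 0 ≤ a i j)
    (hsc : ∀ i j : Fin N, Reachable a i j) {ν : Fin N → ℝ} (hν : 0 ≤ ν) (hν0 : ν ≠ 0)
    (hνL : ν ᵥ* lap a = 0) (i : Fin N) : 0 < ν i := by
  refine (hν i).lt_of_ne fun hi => hν0 (funext fun k => ?_)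
  induction hsc i k with
  | refl => exact hi.symm
  | @tail u v _ huv hu =>
    by_cases hvu : v = u
    · rwa [hvu]
    · refine eq_zero_of_vecMul_eq_zero_of_apply_neg (lap_apply_nonpos_of_ne ha) hν hνL hu ?_
      rwa [lap_apply_of_ne hvu, neg_neg_iff_pos]

end Laplacian

/-- The Laplacian matrix of a strongly connected weighted directed graph has a
left eigenvector, associated with the eigenvalue zero, all of whose entries
are positive. -/
theorem exists_positive_left_kernel_vector_of_strongly_connected
    (N : ℕ) (hN : 0 < N)
    (a : Fin N → Fin N → ℝ)
    (ha : ∀ i j : Fin N, i ≠ j → 0 ≤ a i j)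
    (hsc : ∀ i j : Fin N, Reachable a i j) :
    ∃ μ : Fin N → ℝ, (∀ i, 0 < μ i) ∧ ∀ j : Fin N, ∑ i, μ i * lap a i j = 0 := by
  have : Nonempty (Fin N) := ⟨⟨0, hN⟩⟩
  obtain ⟨μ, hμ0, hμL⟩ := Matrix.exists_ne_zero_vecMul_eq_zero (lap_mulVec_one a)
  have habsL : Matrix.vecMul |μ| (lap a) = 0 :=
    Matrix.abs_vecMul_eq_zero (lap_apply_nonpos_of_ne ha) (lap_mulVec_one a) hμL
  exact ⟨|μ|, pos_of_vecMul_lap_eq_zero ha hsc (abs_nonneg μ) (by simpa using hμ0) habsL,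
    congrFun habsL⟩
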